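/- For m ≥ 3, the subgroup SO(m-1, ℝ) (embedded as block-diagonal rotations fixing the last coordinate) is a maximal connected closed subgroup of SO(m, ℝ): any connected closed subgroup of SO(m) strictly containing this copy of SO(m-1) equals SO(m). -/

import Mathlib

/-!
The stabiliser `SO(m)` of `e = e_last` acts transitively on each sphere
`{x | x ⬝ᵥ x = 1, x_last = c}` (a product of two Householder reflections does it), so the orbit
`K • e` is determined by its set of heights `C = {A_last,last | A ∈ K}`. This set is compact,
connected, contains `1` and some `c < 1`. Writing heights as cosines of angles, composing elements
of `K` adds angles, which forces `C = [-1, 1]`. Hence `K • e` is the whole sphere, and any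
`A ∈ SO(m + 1)` factors as `B * (B⁻¹ * A)` with `B ∈ K` and `B⁻¹ * A` in the stabiliser.
-/

-- With `a = cos α`, `b = cos β`, the closure condition says `cos (α + β) ∈ C`.
theorem Icc_neg_one_one_subset_of_mul_sub_sqrt_mul_sqrt_mem {C : Set ℝ} (hC : IsCompact C)
    (hCconn : IsPreconnected C) (h1 : 1 ∈ C) (hlt : ∃ c ∈ C, c < 1)
    (hmul : ∀ a ∈ C, ∀ b ∈ C, a * b - √(1 - a ^ 2) * √(1 - b ^ 2) ∈ C) :
    Set.Icc (-1) 1 ⊆ C := by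
  obtain ⟨c, hc, hc1⟩ := hlt
  have hinf : sInf C ∈ C := hC.sInf_mem ⟨1, h1⟩
  have hle : ∀ x ∈ C, sInf C ≤ x := fun x hx => csInf_le hC.bddBelow hx
  have hbot : Set.Icc (sInf C) 1 ⊆ C := hCconn.Icc_subset hinf h1
  suffices sInf C ≤ -1 from (Set.Icc_subset_Icc_left this).trans hbot
  by_contra! hgt
  set a := sInf C
  have ha1 : a < 1 := (hle c hc).trans_lt hc1
  have hsq : √(1 - a ^ 2) * √(1 - a ^ 2) = 1 - a ^ 2 := Real.mul_self_sqrt (by nlinarith)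
  rcases le_or_gt a 0 with ha0 | ha0
  · have := hle _ (hmul a hinf (-a) (hbot ⟨by linarith, by linarith⟩))
    rw [neg_sq, hsq] at this
    linarith
  · have := hle _ (hmul a hinf a hinf)
    rw [hsq] at this
    nlinarith

namespace Matrix

variable {n : Type*} [Fintype n]

theorem exists_ne_zero_dotProduct_eq_zero (hn : 2 < Fintype.card n) (a b : n → ℝ) :
    ∃ z ≠ 0, a ⬝ᵥ z = 0 ∧ b ⬝ᵥ z = 0 := by
  have hker : LinearMap.ker (mulVecLin (of ![a, b])) ≠ ⊥ :=
    LinearMap.ker_ne_bot_of_finrank_lt (by simpa using hn)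
  obtain ⟨z, hz, hz0⟩ := (Submodule.ne_bot_iff _).mp hker
  have hz' := congrFun (LinearMap.mem_ker.mp hz)
  exact ⟨z, hz0, by simpa [mulVec] using hz' 0, by simpa [mulVec] using hz' 1⟩

variable [DecidableEq n]

-- The reflection in `uᗮ`; since `2 / 0 = 0`, `householder 0 = 1`.
noncomputable def householder (u : n → ℝ) : Matrix n n ℝ :=
  1 - (2 / (u ⬝ᵥ u)) • vecMulVec u u

theorem householder_mulVec (u x : n → ℝ) :
    householder u *ᵥ x = x - (2 * (u ⬝ᵥ x) / (u ⬝ᵥ u)) • u := by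
  rw [householder, sub_mulVec, one_mulVec, smul_mulVec, vecMulVec_mulVec, op_smul_eq_smul,
    smul_smul, div_mul_eq_mul_div, mul_comm 2]

theorem householder_mulVec_of_dotProduct_eq_zero {u x : n → ℝ} (h : u ⬝ᵥ x = 0) :
    householder u *ᵥ x = x := by
  simp [householder_mulVec, h]

theorem householder_sub_mulVec {v w : n → ℝ} (h : v ⬝ᵥ v = w ⬝ᵥ w) :
    householder (v - w) *ᵥ v = w := by
  have hsq : (v - w) ⬝ᵥ (v - w) = 2 * ((v - w) ⬝ᵥ v) := by
    simp only [sub_dotProduct, dotProduct_sub, dotProduct_comm w v, h]; ring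
  by_cases hvw : (v - w) ⬝ᵥ v = 0
  · have : v - w = 0 := dotProduct_self_eq_zero.mp (by rw [hsq, hvw, mul_zero])
    rw [sub_eq_zero.mp this, sub_self, householder_mulVec]; simp
  · rw [householder_mulVec, hsq, div_self (mul_ne_zero two_ne_zero hvw), one_smul, sub_sub_cancel]

theorem householder_mem_orthogonalGroup (u : n → ℝ) :
    householder u ∈ orthogonalGroup n ℝ := by
  set c := 2 / (u ⬝ᵥ u)
  have hc : c * c * (u ⬝ᵥ u) = 2 * c := by
    by_cases hu : u ⬝ᵥ u = 0
    · simp [c, hu]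
    · simp only [c]; field_simp
  have hsq : vecMulVec u u * vecMulVec u u = (u ⬝ᵥ u) • vecMulVec u u := by
    rw [vecMulVec_mul_vecMulVec, vecMulVec_smul]
  rw [mem_orthogonalGroup_iff, householder, transpose_sub, transpose_one, transpose_smul,
    transpose_vecMulVec]
  calc (1 - c • vecMulVec u u) * (1 - c • vecMulVec u u)
      = 1 - (2 * c - c * c * (u ⬝ᵥ u)) • vecMulVec u u := by
        simp only [sub_mul, mul_sub, one_mul, mul_one, smul_mul_smul_comm, hsq, smul_smul]
        module
    _ = 1 := by rw [hc, sub_self, zero_smul, sub_zero]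

theorem det_householder {u : n → ℝ} (hu : u ≠ 0) : (householder u).det = -1 := by
  have hu' : u ⬝ᵥ u ≠ 0 := fun h => hu (dotProduct_self_eq_zero.mp h)
  rw [householder, sub_eq_add_neg, ← neg_smul, ← smul_vecMulVec, vecMulVec_eq Unit,
    det_one_add_replicateCol_mul_replicateRow, dotProduct_smul, smul_eq_mul]
  field_simp
  ring

theorem exists_mem_specialOrthogonalGroup_mulVec_eq (hn : 2 < Fintype.card n)
    {e v w : n → ℝ} (hvw : v ⬝ᵥ v = w ⬝ᵥ w) (he : v ⬝ᵥ e = w ⬝ᵥ e) :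
    ∃ R ∈ specialOrthogonalGroup n ℝ, R *ᵥ e = e ∧ R *ᵥ v = w := by
  rcases eq_or_ne v w with rfl | hne
  · exact ⟨1, one_mem _, one_mulVec e, one_mulVec v⟩
  obtain ⟨z, hz0, hzw, hze⟩ := exists_ne_zero_dotProduct_eq_zero hn w e
  have hvwe : (v - w) ⬝ᵥ e = 0 := by rw [sub_dotProduct, he, sub_self]
  refine ⟨householder z * householder (v - w), mem_specialOrthogonalGroup_iff.mpr
    ⟨mul_mem (householder_mem_orthogonalGroup z) (householder_mem_orthogonalGroup _), ?_⟩, ?_, ?_⟩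
  · rw [det_mul, det_householder hz0, det_householder (sub_ne_zero.mpr hne)]; norm_num
  · rw [← mulVec_mulVec, householder_mulVec_of_dotProduct_eq_zero hvwe,
      householder_mulVec_of_dotProduct_eq_zero (by rwa [dotProduct_comm])]
  · rw [← mulVec_mulVec, householder_sub_mulVec hvw,
      householder_mulVec_of_dotProduct_eq_zero (by rwa [dotProduct_comm])]

theorem isCompact_unitaryGroup {𝕜 : Type*} [RCLike 𝕜] :
    IsCompact (unitaryGroup n 𝕜 : Set (Matrix n n 𝕜)) :=
  IsCompact.of_isClosed_subset (t := (unitaryGroup n 𝕜 : Set (Matrix n n 𝕜)))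
    (isCompact_univ_pi fun _ => isCompact_univ_pi fun _ => isCompact_closedBall (0 : 𝕜) 1)
    isClosed_unitary fun _ hU i _ j _ => by simpa using entry_norm_bound_of_unitary hU i j

instance {𝕜 : Type*} [RCLike 𝕜] : CompactSpace (unitaryGroup n 𝕜) :=
  isCompact_iff_compactSpace.mp isCompact_unitaryGroup

theorem mulVec_dotProduct_mulVec_of_mem_orthogonalGroup {A : Matrix n n ℝ}
    (hA : A ∈ orthogonalGroup n ℝ) (x y : n → ℝ) : (A *ᵥ x) ⬝ᵥ (A *ᵥ y) = x ⬝ᵥ y := by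
  rw [dotProduct_mulVec, ← vecMul_transpose, vecMul_vecMul, (mem_orthogonalGroup_iff' n ℝ).mp hA,
    vecMul_one]

theorem abs_apply_le_one_of_mem_orthogonalGroup {A : Matrix n n ℝ}
    (hA : A ∈ orthogonalGroup n ℝ) (i j : n) : |A i j| ≤ 1 := by
  simpa using entry_norm_bound_of_unitary hA i j

theorem mulVec_single_one_eq_of_apply_eq_one {A : Matrix n n ℝ} (hA : A ∈ orthogonalGroup n ℝ)
    {j : n} (h : A j j = 1) : A *ᵥ Pi.single j 1 = Pi.single j 1 := by
  set y := A *ᵥ Pi.single j 1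
  have hyy : y ⬝ᵥ y = 1 := by
    rw [mulVec_dotProduct_mulVec_of_mem_orthogonalGroup hA]; simp
  have hye : y ⬝ᵥ Pi.single j 1 = 1 := by simp [y, h]
  rw [← sub_eq_zero, ← dotProduct_self_eq_zero]
  simp only [sub_dotProduct, dotProduct_sub, hyy, hye, dotProduct_comm _ y]
  simp

theorem apply_eq_single_of_mulVec_single_one_eq {A : Matrix n n ℝ}
    (hA : A ∈ orthogonalGroup n ℝ) {j : n} (h : A *ᵥ Pi.single j 1 = Pi.single j 1) (i : n) :
    A i j = (Pi.single j 1 : n → ℝ) i ∧ A j i = (Pi.single j 1 : n → ℝ) i := by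
  have hT : Aᵀ *ᵥ Pi.single j 1 = Pi.single j 1 := by
    conv_lhs => rw [← h, mulVec_mulVec, (mem_orthogonalGroup_iff' n ℝ).mp hA, one_mulVec]
  exact ⟨by simpa using congrFun h i, by simpa using congrFun hT i⟩

theorem orthogonalGroup_inv_mul_apply (P Q : orthogonalGroup n ℝ) (i k : n) :
    ((P⁻¹ * Q : orthogonalGroup n ℝ) : Matrix n n ℝ) i k =
      ((P : Matrix n n ℝ) *ᵥ Pi.single i 1) ⬝ᵥ ((Q : Matrix n n ℝ) *ᵥ Pi.single k 1) := by
  simp [mul_apply, dotProduct]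

-- The `j`-th coordinates of the orbit `K • e_j`.
def diagEntries (K : Subgroup (orthogonalGroup n ℝ)) (j : n) : Set ℝ :=
  (fun A : orthogonalGroup n ℝ => (A : Matrix n n ℝ) j j) '' K

theorem exists_mem_mulVec_single_one_eq (hn : 2 < Fintype.card n)
    {K : Subgroup (orthogonalGroup n ℝ)} {j : n}
    (hstab : ∀ A : orthogonalGroup n ℝ, (A : Matrix n n ℝ).det = 1 →
      (A : Matrix n n ℝ) *ᵥ Pi.single j 1 = Pi.single j 1 → A ∈ K)
    {A : orthogonalGroup n ℝ} (hA : A ∈ K) {x : n → ℝ} (hx : x ⬝ᵥ x = 1)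
    (hxj : x j = (A : Matrix n n ℝ) j j) :
    ∃ B ∈ K, (B : Matrix n n ℝ) *ᵥ Pi.single j 1 = x := by
  have hy : ((A : Matrix n n ℝ) *ᵥ Pi.single j 1) ⬝ᵥ ((A : Matrix n n ℝ) *ᵥ Pi.single j 1) =
      x ⬝ᵥ x := by
    rw [hx, mulVec_dotProduct_mulVec_of_mem_orthogonalGroup A.2]; simp
  have hyj : ((A : Matrix n n ℝ) *ᵥ Pi.single j 1) ⬝ᵥ Pi.single j 1 = x ⬝ᵥ Pi.single j 1 := by
    simp [hxj]
  obtain ⟨R, hR, hRe, hRy⟩ := exists_mem_specialOrthogonalGroup_mulVec_eq hn hy hyj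
  obtain ⟨hRO, hRdet⟩ := mem_specialOrthogonalGroup_iff.mp hR
  refine ⟨⟨R, hRO⟩ * A, K.mul_mem (hstab ⟨R, hRO⟩ hRdet hRe) hA, ?_⟩
  rw [Submonoid.coe_mul, ← mulVec_mulVec, hRy]

theorem mul_sub_sqrt_mul_sqrt_mem_diagEntries (hn : 2 < Fintype.card n)
    {K : Subgroup (orthogonalGroup n ℝ)} {j : n}
    (hstab : ∀ A : orthogonalGroup n ℝ, (A : Matrix n n ℝ).det = 1 →
      (A : Matrix n n ℝ) *ᵥ Pi.single j 1 = Pi.single j 1 → A ∈ K)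
    {a b : ℝ} (ha : a ∈ diagEntries K j) (hb : b ∈ diagEntries K j) :
    a * b - √(1 - a ^ 2) * √(1 - b ^ 2) ∈ diagEntries K j := by
  obtain ⟨i, hij⟩ := Fintype.exists_ne_of_one_lt_card (by omega) j
  have hdot : ∀ s c t d : ℝ, (s • Pi.single i 1 + c • Pi.single j 1 : n → ℝ) ⬝ᵥ
      (t • Pi.single i 1 + d • Pi.single j 1) = s * t + c * d := by
    intro s c t d
    simp [dotProduct_add, hij, hij.symm, mul_comm]
  have hunit : ∀ c ∈ diagEntries K j, ∀ s, s ^ 2 = 1 - c ^ 2 →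
      ∃ B ∈ K, (B : Matrix n n ℝ) *ᵥ Pi.single j 1 = s • Pi.single i 1 + c • Pi.single j 1 := by
    rintro _ ⟨A, hA, rfl⟩ s hs
    refine exists_mem_mulVec_single_one_eq hn hstab hA ?_ (by simp [hij.symm])
    rw [hdot]; linear_combination hs
  have hsq : ∀ c ∈ diagEntries K j, √(1 - c ^ 2) ^ 2 = 1 - c ^ 2 := by
    rintro _ ⟨A, -, rfl⟩
    have := abs_apply_le_one_of_mem_orthogonalGroup A.2 j j
    exact Real.sq_sqrt (by nlinarith [abs_le.mp this])
  obtain ⟨P, hP, hPe⟩ := hunit a ha _ (hsq a ha)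
  obtain ⟨Q, hQ, hQe⟩ := hunit b hb (-√(1 - b ^ 2)) (by rw [neg_sq, hsq b hb])
  refine ⟨P⁻¹ * Q, K.mul_mem (K.inv_mem hP) hQ, ?_⟩
  simp only [orthogonalGroup_inv_mul_apply, hPe, hQe, hdot]
  ring

theorem mem_of_det_eq_one_of_stabilizer_lt (hn : 2 < Fintype.card n)
    {K : Subgroup (orthogonalGroup n ℝ)} (hK : IsClosed (K : Set (orthogonalGroup n ℝ)))
    (hKconn : IsPreconnected (K : Set (orthogonalGroup n ℝ)))
    (hKdet : ∀ A ∈ K, (A : Matrix n n ℝ).det = 1) {j : n}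
    (hstab : ∀ A : orthogonalGroup n ℝ, (A : Matrix n n ℝ).det = 1 →
      (A : Matrix n n ℝ) *ᵥ Pi.single j 1 = Pi.single j 1 → A ∈ K)
    (hstrict : ∃ A ∈ K, (A : Matrix n n ℝ) *ᵥ Pi.single j 1 ≠ Pi.single j 1)
    {A : orthogonalGroup n ℝ} (hA : (A : Matrix n n ℝ).det = 1) : A ∈ K := by
  have hcont : Continuous fun A : orthogonalGroup n ℝ => (A : Matrix n n ℝ) j j :=
    continuous_subtype_val.matrix_elem j j
  have hlt : ∃ c ∈ diagEntries K j, c < 1 := by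
    obtain ⟨A₀, hA₀, hA₀e⟩ := hstrict
    refine ⟨_, ⟨A₀, hA₀, rfl⟩, lt_of_le_of_ne ?_ fun h => hA₀e ?_⟩
    · exact (abs_le.mp (abs_apply_le_one_of_mem_orthogonalGroup A₀.2 j j)).2
    · exact mulVec_single_one_eq_of_apply_eq_one A₀.2 h
  have hIcc : Set.Icc (-1) 1 ⊆ diagEntries K j :=
    Icc_neg_one_one_subset_of_mul_sub_sqrt_mul_sqrt_mem (hK.isCompact.image hcont)
      (hKconn.image _ hcont.continuousOn) ⟨1, K.one_mem, by simp⟩ hlt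
      fun a ha b hb => mul_sub_sqrt_mul_sqrt_mem_diagEntries hn hstab ha hb
  obtain ⟨A', hA'K, hA'⟩ := hIcc (abs_le.mp (abs_apply_le_one_of_mem_orthogonalGroup A.2 j j))
  obtain ⟨B, hBK, hB⟩ := exists_mem_mulVec_single_one_eq hn hstab hA'K
    (x := (A : Matrix n n ℝ) *ᵥ Pi.single j 1)
    (by rw [mulVec_dotProduct_mulVec_of_mem_orthogonalGroup A.2]; simp) (by simp [hA'])
  have hBA : B⁻¹ * A ∈ K := by
    refine hstab _ ?_ ?_
    · simp [det_mul, hA, hKdet B hBK, star_eq_conjTranspose]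
    · rw [Submonoid.coe_mul, ← mulVec_mulVec, ← hB, mulVec_mulVec, ← Submonoid.coe_mul,
        inv_mul_cancel, OneMemClass.coe_one, one_mulVec]
  simpa using K.mul_mem hBK hBA
end Matrix


/-- `SO(m)` embedded block-diagonally (as `diag(B, 1)`) is a maximal connected closed subgroup
of `SO(m+1)` (m + 1 ≥ 3): any connected closed subgroup of `SO(m+1)` strictly containing the
embedded copy of `SO(m)` equals `SO(m+1)`. -/
theorem stmt16 (m : ℕ) (hm : 2 ≤ m)
    (K : Subgroup (Matrix.orthogonalGroup (Fin (m + 1)) ℝ))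
    (hKclosed : IsClosed (K : Set (Matrix.orthogonalGroup (Fin (m + 1)) ℝ)))
    (hKconn : IsConnected (K : Set (Matrix.orthogonalGroup (Fin (m + 1)) ℝ)))
    (hKSO : ∀ A ∈ K, ((A : Matrix (Fin (m + 1)) (Fin (m + 1)) ℝ)).det = 1)
    (hsub : ∀ A : Matrix.orthogonalGroup (Fin (m + 1)) ℝ,
      ((A : Matrix (Fin (m + 1)) (Fin (m + 1)) ℝ)).det = 1 →
      (A : Matrix (Fin (m + 1)) (Fin (m + 1)) ℝ) (Fin.last m) (Fin.last m) = 1 →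
      (∀ i : Fin m, (A : Matrix (Fin (m + 1)) (Fin (m + 1)) ℝ) i.castSucc (Fin.last m) = 0 ∧
        (A : Matrix (Fin (m + 1)) (Fin (m + 1)) ℝ) (Fin.last m) i.castSucc = 0) →
      A ∈ K)
    (hstrict : ∃ A ∈ K, ¬ ((A : Matrix (Fin (m + 1)) (Fin (m + 1)) ℝ) (Fin.last m)
        (Fin.last m) = 1 ∧
      ∀ i : Fin m, (A : Matrix (Fin (m + 1)) (Fin (m + 1)) ℝ) i.castSucc (Fin.last m) = 0 ∧
        (A : Matrix (Fin (m + 1)) (Fin (m + 1)) ℝ) (Fin.last m) i.castSucc = 0)) :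
    ∀ A : Matrix.orthogonalGroup (Fin (m + 1)) ℝ,
      ((A : Matrix (Fin (m + 1)) (Fin (m + 1)) ℝ)).det = 1 → A ∈ K := by
  have hcorner : ∀ A : Matrix.orthogonalGroup (Fin (m + 1)) ℝ,
      (A : Matrix (Fin (m + 1)) (Fin (m + 1)) ℝ).mulVec (Pi.single (Fin.last m) 1) =
        Pi.single (Fin.last m) 1 →
      (A : Matrix (Fin (m + 1)) (Fin (m + 1)) ℝ) (Fin.last m) (Fin.last m) = 1 ∧
      ∀ i : Fin m, (A : Matrix (Fin (m + 1)) (Fin (m + 1)) ℝ) i.castSucc (Fin.last m) = 0 ∧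
        (A : Matrix (Fin (m + 1)) (Fin (m + 1)) ℝ) (Fin.last m) i.castSucc = 0 := by
    intro A h
    have hA := Matrix.apply_eq_single_of_mulVec_single_one_eq A.2 h
    exact ⟨by simpa using (hA (Fin.last m)).1,
      fun i => by simpa [(Fin.castSucc_lt_last i).ne] using hA i.castSucc⟩
  obtain ⟨A₀, hA₀, hA₀e⟩ := hstrict
  exact fun A hA => Matrix.mem_of_det_eq_one_of_stabilizer_lt
    (by rw [Fintype.card_fin]; omega) hKclosed hKconn.isPreconnected hKSO (fun B hB h => hsub B hB (hcorner B h).1 (hcorner B h).2)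
    ⟨A₀, hA₀, fun h => hA₀e (hcorner A₀ h)⟩ hA
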